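/- arXiv:2210.04321 — 6 statements merged into one kernel-verified Lean document; each statement's English description precedes it below -/
import Mathlib

section
/- Monotonicity of the scheme update in its own argument: if 1 ≥ (δt/δx)·(b + 2M‖h'‖_∞·max_{0≤ρ≤M} κ(ρ)/δx), then the map ρᵢ ↦ ρᵢ⁺ = ρᵢ + (δt/δx)[ρ_{i−1}h((Q'(ρ_{i−1})−Q'(ρᵢ))/δx) − ρᵢh((Q'(ρᵢ)−Q'(ρ_{i+1}))/δx)] has nonnegative partial derivative with respect to ρᵢ, for ρ_{i−1}, ρᵢ, ρ_{i+1} ∈ [0, M]. -/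
open Set

lemma mono_deriv_nonneg' {h : ℝ → ℝ} (hdiff : Differentiable ℝ h)
    (hmono : Monotone h) (s : ℝ) : 0 ≤ deriv h s := by
  have hd := (hdiff s).hasDerivAt
  rw [hasDerivAt_iff_tendsto_slope] at hd
  have hd' : Filter.Tendsto (slope h s) (nhdsWithin s (Set.Ioi s)) (nhds (deriv h s)) :=
    hd.mono_left (nhdsWithin_mono s (fun x hx => ne_of_gt hx))
  refine ge_of_tendsto hd' ?_
  filter_upwards [self_mem_nhdsWithin] with t ht
  have hst : s < t := ht
  have hh := hmono hst.le
  rw [slope_def_field]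
  exact div_nonneg (by linarith) (by linarith)

theorem scheme_update_monotone (R b M δt δx C K : ℝ)
    (hR : 1 < R) (hb : 0 < b) (hM : M ∈ Set.Ioo (0 : ℝ) R)
    (hδt : 0 < δt) (hδx : 0 < δx)
    (h : ℝ → ℝ) (hdiff : Differentiable ℝ h) (hmono : Monotone h) (h0 : h 0 = 0)
    (hhrange : ∀ s, h s ∈ Set.Ioo (-1 : ℝ) b)
    (hC : ∀ s, |deriv h s| ≤ C)
    (κ : ℝ → ℝ) (hκcont : ContinuousOn κ (Set.Ico 0 R))
    (hκnonneg : ∀ ρ ∈ Set.Ico (0 : ℝ) R, 0 ≤ κ ρ)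
    (hκ0 : ∀ ρ ∈ Set.Icc (0 : ℝ) 1, κ ρ = 0)
    (hK : IsGreatest (κ '' Set.Icc (0 : ℝ) M) K)
    (Q' : ℝ → ℝ) (hQ' : ∀ ρ ∈ Set.Ico (0 : ℝ) R, HasDerivAt Q' (κ ρ) ρ)
    (hCFL : 1 ≥ (δt / δx) * (b + 2 * M * C * K / δx))
    (ρim ρip : ℝ) (him : ρim ∈ Set.Icc (0 : ℝ) M) (hip : ρip ∈ Set.Icc (0 : ℝ) M)
    (F : ℝ → ℝ)
    (hF : ∀ r, F r = r + (δt / δx) *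
      (ρim * h ((Q' ρim - Q' r) / δx) - r * h ((Q' r - Q' ρip) / δx))) :
    ∀ r ∈ Set.Icc (0 : ℝ) M, 0 ≤ deriv F r := by
  intro r hr
  have hrR : r ∈ Set.Ico (0 : ℝ) R := ⟨hr.1, lt_of_le_of_lt hr.2 hM.2⟩
  have hQr : HasDerivAt Q' (κ r) r := hQ' r hrR
  set q := κ r with hqdef
  set s1 := (Q' ρim - Q' r) / δx with hs1
  set s2 := (Q' r - Q' ρip) / δx with hs2
  have hinner1 : HasDerivAt (fun x => (Q' ρim - Q' x) / δx) ((0 - q) / δx) r :=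
    ((hasDerivAt_const r (Q' ρim)).sub hQr).div_const δx
  have hinner2 : HasDerivAt (fun x => (Q' x - Q' ρip) / δx) (q / δx) r :=
    (hQr.sub_const (Q' ρip)).div_const δx
  have hh1 : HasDerivAt (fun x => h ((Q' ρim - Q' x) / δx)) (deriv h s1 * ((0 - q) / δx)) r :=
    (hdiff s1).hasDerivAt.comp r hinner1
  have hh2 : HasDerivAt (fun x => x * h ((Q' x - Q' ρip) / δx))
      (1 * h s2 + r * (deriv h s2 * (q / δx))) r :=
    (hasDerivAt_id r).mul ((hdiff s2).hasDerivAt.comp r hinner2)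
  have hFd : HasDerivAt F
      (1 + (δt / δx) * (ρim * (deriv h s1 * ((0 - q) / δx)) -
        (1 * h s2 + r * (deriv h s2 * (q / δx))))) r := by
    have hFe : F = fun x => x + (δt / δx) *
        (ρim * h ((Q' ρim - Q' x) / δx) - x * h ((Q' x - Q' ρip) / δx)) := funext hF
    rw [hFe]
    exact (hasDerivAt_id r).add (((hh1.const_mul ρim).sub hh2).const_mul (δt / δx))
  rw [hFd.deriv]
  clear_value q s1 s2
  -- bounds
  have hlam : 0 ≤ δt / δx := le_of_lt (div_pos hδt hδx)
  have hqnn : 0 ≤ q := hqdef ▸ hκnonneg r hrR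
  have hqK : q ≤ K := hqdef ▸ hK.2 ⟨r, hr, rfl⟩
  have hMnn : 0 ≤ M := le_of_lt hM.1
  have hKnn : 0 ≤ K := le_trans hqnn hqK
  have hD1nn : 0 ≤ deriv h s1 := mono_deriv_nonneg' hdiff hmono s1
  have hD2nn : 0 ≤ deriv h s2 := mono_deriv_nonneg' hdiff hmono s2
  have hD1C : deriv h s1 ≤ C := le_trans (le_abs_self _) (hC s1)
  have hD2C : deriv h s2 ≤ C := le_trans (le_abs_self _) (hC s2)
  have hCnn : 0 ≤ C := le_trans hD1nn hD1C
  have b1 : ρim * deriv h s1 * q ≤ M * C * K :=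
    mul_le_mul (mul_le_mul him.2 hD1C hD1nn hMnn) hqK hqnn (by positivity)
  have b2 : r * deriv h s2 * q ≤ M * C * K :=
    mul_le_mul (mul_le_mul hr.2 hD2C hD2nn hMnn) hqK hqnn (by positivity)
  have b1' : -(M * C * K / δx) ≤ ρim * (deriv h s1 * ((0 - q) / δx)) := by
    have : ρim * deriv h s1 * q / δx ≤ M * C * K / δx := by gcongr
    have e : ρim * (deriv h s1 * ((0 - q) / δx)) = -(ρim * deriv h s1 * q / δx) := by ring
    rw [e]
    linarith
  have b2' : r * (deriv h s2 * (q / δx)) ≤ M * C * K / δx := by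
    have : r * deriv h s2 * q / δx ≤ M * C * K / δx := by gcongr
    linarith [this, (by ring : r * (deriv h s2 * (q / δx)) = r * deriv h s2 * q / δx)]
  have hhs2 : h s2 ≤ b := le_of_lt (hhrange s2).2
  have bound : -(b + 2 * M * C * K / δx) ≤
      ρim * (deriv h s1 * ((0 - q) / δx)) - (1 * h s2 + r * (deriv h s2 * (q / δx))) := by
    have e : 2 * M * C * K / δx = M * C * K / δx + M * C * K / δx := by ring
    rw [e]; linarith
  have key := mul_le_mul_of_nonneg_left bound hlam
  have e2 : δt / δx * -(b + 2 * M * C * K / δx) = -(δt / δx * (b + 2 * M * C * K / δx)) := by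
    ring
  rw [e2] at key
  linarith [key, hCFL]
end

section
/- Maximum principle / positivity for the scheme: assume 1 ≥ (δt/δx)·(b + 2M‖h'‖_∞·max_{0≤ρ≤M} κ(ρ)/δx) where M = sup_i ρᵢ < R. Then each updated value ρᵢ⁺ = ρᵢ + (δt/δx)[ρ_{i−1}h((Q'(ρ_{i−1})−Q'(ρᵢ))/δx) − ρᵢh((Q'(ρᵢ)−Q'(ρ_{i+1}))/δx)] lies in [0, M]. -/
open Set

theorem scheme_maximum_principle (R b M δt δx C K : ℝ)
    (hR : 1 < R) (hb : 0 < b)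
    (hδt : 0 < δt) (hδx : 0 < δx)
    (h : ℝ → ℝ) (hdiff : Differentiable ℝ h) (hmono : StrictMono h) (h0 : h 0 = 0)
    (hhrange : ∀ s, h s ∈ Set.Ioo (-1 : ℝ) b)
    (hC : ∀ s, |deriv h s| ≤ C)
    (κ : ℝ → ℝ) (hκcont : ContinuousOn κ (Set.Ico 0 R))
    (hκnonneg : ∀ ρ ∈ Set.Ico (0 : ℝ) R, 0 ≤ κ ρ)
    (hκ0 : ∀ ρ ∈ Set.Icc (0 : ℝ) 1, κ ρ = 0)
    (Q' : ℝ → ℝ) (hQ'mono : MonotoneOn Q' (Set.Ico (0 : ℝ) R))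
    (hQ' : ∀ ρ ∈ Set.Ico (0 : ℝ) R, HasDerivAt Q' (κ ρ) ρ)
    (ρ : ℤ → ℝ) (hρ : ∀ i, ρ i ∈ Set.Ico (0 : ℝ) R)
    (hMsup : IsLUB (Set.range ρ) M) (hMR : M < R)
    (hK : IsGreatest (κ '' Set.Icc (0 : ℝ) M) K)
    (hCFL : 1 ≥ (δt / δx) * (b + 2 * M * C * K / δx))
    (ρplus : ℤ → ℝ)
    (hplus : ∀ i, ρplus i = ρ i + (δt / δx) *
      (ρ (i - 1) * h ((Q' (ρ (i - 1)) - Q' (ρ i)) / δx)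
        - ρ i * h ((Q' (ρ i) - Q' (ρ (i + 1))) / δx))) :
    ∀ i, ρplus i ∈ Set.Icc (0 : ℝ) M := by
  -- basic facts
  have hρ0 : ∀ j, 0 ≤ ρ j := fun j => (hρ j).1
  have hρle : ∀ j, ρ j ≤ M := fun j => hMsup.1 ⟨j, rfl⟩
  have hM0 : 0 ≤ M := le_trans (hρ0 0) (hρle 0)
  have hC0 : 0 ≤ C := le_trans (abs_nonneg _) (hC 0)
  have hK0 : 0 ≤ K := by
    obtain ⟨x, hx, hxe⟩ := hK.1
    have : x ∈ Set.Ico (0 : ℝ) R := ⟨hx.1, lt_of_le_of_lt hx.2 hMR⟩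
    exact hxe ▸ hκnonneg x this
  -- |h s| ≤ C * |s|
  have hLip : ∀ s : ℝ, |h s| ≤ C * |s| := by
    intro s
    have := Convex.norm_image_sub_le_of_norm_deriv_le (f := h) (s := (Set.univ : Set ℝ))
      (fun x _ => hdiff x) (fun x _ => hC x) convex_univ (Set.mem_univ 0) (Set.mem_univ s)
    simpa [h0, Real.norm_eq_abs] using this
  -- Q' is K-Lipschitz (one-sided) on [0, M]
  have hQlip : ∀ x y : ℝ, 0 ≤ x → y ≤ M → x ≤ y → Q' y - Q' x ≤ K * (y - x) := by
    intro x y hx hy hxy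
    rcases eq_or_lt_of_le hxy with rfl | hlt
    · simp
    have hsub : Set.Icc x y ⊆ Set.Ico 0 R := fun z hz =>
      ⟨le_trans hx hz.1, lt_of_le_of_lt (le_trans hz.2 hy) hMR⟩
    have hcont : ContinuousOn Q' (Set.Icc x y) := fun z hz =>
      ((hQ' z (hsub hz)).continuousAt).continuousWithinAt
    obtain ⟨c, hc, hceq⟩ := exists_hasDerivAt_eq_slope Q' κ hlt hcont
      (fun z hz => hQ' z (hsub ⟨hz.1.le, hz.2.le⟩))
    have hcK : κ c ≤ K := hK.2 ⟨c, ⟨le_trans hx hc.1.le, le_trans hc.2.le hy⟩, rfl⟩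
    have hne : y - x ≠ 0 := sub_ne_zero.2 hlt.ne'
    rw [eq_div_iff hne] at hceq
    rw [← hceq]
    exact mul_le_mul_of_nonneg_right hcK (by linarith)
  -- Q' monotone on [0, M]
  have hQmono : ∀ x y : ℝ, 0 ≤ x → y ≤ M → x ≤ y → Q' x ≤ Q' y := by
    intro x y hx hy hxy
    exact hQ'mono ⟨hx, lt_of_le_of_lt (le_trans hxy hy) hMR⟩
      ⟨le_trans hx hxy, lt_of_le_of_lt hy hMR⟩ hxy
  intro i
  set lam := δt / δx with hlam
  have hlam0 : 0 < lam := div_pos hδt hδx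
  set a1 := (Q' (ρ (i - 1)) - Q' (ρ i)) / δx with ha1
  set a2 := (Q' (ρ i) - Q' (ρ (i + 1))) / δx with ha2
  -- sign of h s matches sign of s
  have hsign : ∀ s : ℝ, 0 < h s → 0 < s := by
    intro s hs
    by_contra hns
    push_neg at hns
    have := hmono.monotone hns
    rw [h0] at this
    linarith
  have hsign' : ∀ s : ℝ, h s < 0 → s < 0 := by
    intro s hs
    by_contra hns
    push_neg at hns
    have := hmono.monotone hns
    rw [h0] at this
    linarith
  -- Upper bound claims
  have hB : 0 ≤ C * K * (M - ρ i) / δx :=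
    div_nonneg (mul_nonneg (mul_nonneg hC0 hK0) (by linarith [hρle i])) hδx.le
  have claim1 : ρ (i - 1) * h a1 ≤ M * (C * K * (M - ρ i) / δx) := by
    rcases le_or_gt (h a1) 0 with hn | hp
    · have : ρ (i - 1) * h a1 ≤ 0 := mul_nonpos_of_nonneg_of_nonpos (hρ0 _) hn
      exact le_trans this (mul_nonneg hM0 hB)
    · have ha1pos : 0 < a1 := hsign _ hp
      have hQgt : Q' (ρ i) < Q' (ρ (i - 1)) := by
        have h' := mul_pos ha1pos hδx
        rw [ha1, div_mul_cancel₀ _ hδx.ne'] at h'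
        linarith
      have hlt : ρ i < ρ (i - 1) := by
        by_contra hle
        push_neg at hle
        exact absurd (hQmono _ _ (hρ0 _) (hρle _) hle) (not_le.mpr hQgt)
      have hha1 : h a1 ≤ C * K * (M - ρ i) / δx := by
        have h1 : h a1 ≤ C * a1 := by
          have := hLip a1
          rw [abs_of_pos hp, abs_of_pos ha1pos] at this
          exact this
        have h2 : Q' (ρ (i - 1)) - Q' (ρ i) ≤ K * (ρ (i - 1) - ρ i) :=
          hQlip _ _ (hρ0 _) (hρle _) hlt.le
        have h3 : K * (ρ (i - 1) - ρ i) ≤ K * (M - ρ i) :=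
          mul_le_mul_of_nonneg_left (by linarith [hρle (i - 1)]) hK0
        rw [ha1] at h1 ⊢
        calc h ((Q' (ρ (i - 1)) - Q' (ρ i)) / δx) ≤ C * ((Q' (ρ (i - 1)) - Q' (ρ i)) / δx) := h1
          _ ≤ C * (K * (M - ρ i) / δx) := by
              have hnum : Q' (ρ (i - 1)) - Q' (ρ i) ≤ K * (M - ρ i) := by linarith
              gcongr
          _ = C * K * (M - ρ i) / δx := by ring
      calc ρ (i - 1) * h a1 ≤ M * h a1 := by
            apply mul_le_mul_of_nonneg_right (hρle _) hp.le
        _ ≤ M * (C * K * (M - ρ i) / δx) := mul_le_mul_of_nonneg_left hha1 hM0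
  have claim2 : -(ρ i * h a2) ≤ M * (C * K * (M - ρ i) / δx) := by
    rcases le_or_gt 0 (h a2) with hp | hn
    · have : 0 ≤ ρ i * h a2 := mul_nonneg (hρ0 _) hp
      linarith [mul_nonneg hM0 hB]
    · have ha2neg : a2 < 0 := hsign' _ hn
      have hQlt : Q' (ρ i) < Q' (ρ (i + 1)) := by
        have h' := mul_neg_of_neg_of_pos ha2neg hδx
        rw [ha2, div_mul_cancel₀ _ hδx.ne'] at h'
        linarith
      have hlt : ρ i < ρ (i + 1) := by
        by_contra hle
        push_neg at hle
        exact absurd (hQmono _ _ (hρ0 _) (hρle _) hle) (not_le.mpr hQlt)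
      have hha2 : -h a2 ≤ C * K * (M - ρ i) / δx := by
        have h1 : -h a2 ≤ C * (-a2) := by
          have := hLip a2
          rw [abs_of_neg hn, abs_of_neg ha2neg] at this
          exact this
        have h2 : Q' (ρ (i + 1)) - Q' (ρ i) ≤ K * (ρ (i + 1) - ρ i) :=
          hQlip _ _ (hρ0 _) (hρle _) hlt.le
        have h3 : K * (ρ (i + 1) - ρ i) ≤ K * (M - ρ i) :=
          mul_le_mul_of_nonneg_left (by linarith [hρle (i + 1)]) hK0
        have h4 : -a2 ≤ K * (M - ρ i) / δx := by
          have hnum : -(Q' (ρ i) - Q' (ρ (i + 1))) ≤ K * (M - ρ i) := by linarith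
          rw [ha2, ← neg_div]
          gcongr
        calc -h a2 ≤ C * (-a2) := h1
          _ ≤ C * (K * (M - ρ i) / δx) := mul_le_mul_of_nonneg_left h4 hC0
          _ = C * K * (M - ρ i) / δx := by ring
      calc -(ρ i * h a2) = ρ i * (-h a2) := by ring
        _ ≤ M * (C * K * (M - ρ i) / δx) :=
            mul_le_mul (hρle _) hha2 (by linarith) hM0
  -- Lower bound claims
  have claim3 : -(ρ i * (M * C * K / δx)) ≤ ρ (i - 1) * h a1 := by
    rcases le_or_gt 0 (h a1) with hp | hn
    · have h1 : 0 ≤ ρ (i - 1) * h a1 := mul_nonneg (hρ0 _) hp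
      have h2 : 0 ≤ ρ i * (M * C * K / δx) :=
        mul_nonneg (hρ0 _) (div_nonneg (mul_nonneg (mul_nonneg hM0 hC0) hK0) hδx.le)
      linarith
    · have ha1neg : a1 < 0 := hsign' _ hn
      have hQlt : Q' (ρ (i - 1)) < Q' (ρ i) := by
        have h' := mul_neg_of_neg_of_pos ha1neg hδx
        rw [ha1, div_mul_cancel₀ _ hδx.ne'] at h'
        linarith
      have hlt : ρ (i - 1) < ρ i := by
        by_contra hle
        push_neg at hle
        exact absurd (hQmono _ _ (hρ0 _) (hρle _) hle) (not_le.mpr hQlt)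
      have h1 : -h a1 ≤ C * (-a1) := by
        have := hLip a1
        rw [abs_of_neg hn, abs_of_neg ha1neg] at this
        exact this
      have h2 : Q' (ρ i) - Q' (ρ (i - 1)) ≤ K * (ρ i - ρ (i - 1)) :=
        hQlip _ _ (hρ0 _) (hρle _) hlt.le
      have h3 : -a1 ≤ K * ρ i / δx := by
        have hnum : -(Q' (ρ (i - 1)) - Q' (ρ i)) ≤ K * ρ i := by
          nlinarith [hρ0 (i - 1), hK0]
        rw [ha1, ← neg_div]
        gcongr
      have h4 : -h a1 ≤ C * K * ρ i / δx := by
        calc -h a1 ≤ C * (-a1) := h1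
          _ ≤ C * (K * ρ i / δx) := mul_le_mul_of_nonneg_left h3 hC0
          _ = C * K * ρ i / δx := by ring
      have h5 : ρ (i - 1) * (-h a1) ≤ M * (C * K * ρ i / δx) := by
        apply mul_le_mul (hρle _) h4 (by linarith) hM0
      have : ρ (i - 1) * h a1 = -(ρ (i - 1) * (-h a1)) := by ring
      rw [this]
      have : M * (C * K * ρ i / δx) = ρ i * (M * C * K / δx) := by ring
      linarith [h5, this ▸ h5]
  have claim4 : -(ρ i * b) ≤ -(ρ i * h a2) := by
    have := (hhrange a2).2
    nlinarith [hρ0 i]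
  -- CFL consequences
  have hCFL2 : lam * (2 * M * C * K / δx) ≤ 1 := by
    have h1 : 0 ≤ lam * b := mul_nonneg hlam0.le hb.le
    have heq : lam * (b + 2 * M * C * K / δx)
        = lam * b + lam * (2 * M * C * K / δx) := by ring
    linarith [hCFL, heq ▸ hCFL]
  have hMCK : 0 ≤ lam * (M * C * K / δx) :=
    mul_nonneg hlam0.le (div_nonneg (mul_nonneg (mul_nonneg hM0 hC0) hK0) hδx.le)
  have hcfl3 : lam * (b + M * C * K / δx) ≤ 1 := by
    have heq : lam * (b + 2 * M * C * K / δx)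
        = lam * (b + M * C * K / δx) + lam * (M * C * K / δx) := by ring
    linarith [heq ▸ hCFL]
  -- conclude
  rw [hplus i]
  constructor
  · -- nonnegativity
    have hsum : -(ρ i * (M * C * K / δx)) + -(ρ i * b)
        ≤ ρ (i - 1) * h a1 - ρ i * h a2 := by linarith [claim3, claim4]
    have hlow := mul_le_mul_of_nonneg_left hsum hlam0.le
    have heq : lam * (-(ρ i * (M * C * K / δx)) + -(ρ i * b))
        = -(ρ i * (lam * (b + M * C * K / δx))) := by ring
    rw [heq] at hlow
    have h7 : ρ i * (lam * (b + M * C * K / δx)) ≤ ρ i * 1 :=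
      mul_le_mul_of_nonneg_left hcfl3 (hρ0 i)
    linarith
  · -- upper bound
    have hsum : ρ (i - 1) * h a1 - ρ i * h a2
        ≤ 2 * (M * (C * K * (M - ρ i) / δx)) := by linarith [claim1, claim2]
    have hup := mul_le_mul_of_nonneg_left hsum hlam0.le
    have heq : lam * (2 * (M * (C * K * (M - ρ i) / δx)))
        = (M - ρ i) * (lam * (2 * M * C * K / δx)) := by ring
    rw [heq] at hup
    have h6 : (M - ρ i) * (lam * (2 * M * C * K / δx)) ≤ (M - ρ i) * 1 :=
      mul_le_mul_of_nonneg_left hCFL2 (by linarith [hρle i])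
    linarith
end

section
/- Entropy dissipation at first order: with f(δt) := δx·Σᵢ Q(ρᵢ⁺(δt)), where ρᵢ⁺(δt) = ρᵢ + (δt/δx)(G_{i−1} − G_i), G_i = ρᵢh(−q_i), q_i = (Q'(ρ_{i+1}) − Q'(ρᵢ))/δx, one has (df/dδt)(0) = δx·Σᵢ ρᵢ q_i h(−q_i) ≤ 0. -/
open Set intervalIntegral
open MeasureTheory Filter

-- Q vanishes on [0,1]
lemma Fzero_aux (κ : ℝ → ℝ) (hκ0 : ∀ ρ ∈ Set.Icc (0 : ℝ) 1, κ ρ = 0)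
    {x : ℝ} (hx : x ∈ Set.Icc (0 : ℝ) 1) :
    (∫ τ in (1 : ℝ)..x, (x - τ) * κ τ) = 0 := by
  rw [intervalIntegral.integral_congr (g := fun _ => (0 : ℝ))]
  · simp
  · intro t ht
    rw [Set.uIcc_comm, Set.uIcc_of_le hx.2] at ht
    simp [hκ0 t ⟨le_trans hx.1 ht.1, ht.2⟩]

-- derivative at 0
lemma Fderiv_zero (κ : ℝ → ℝ) (hκ0 : ∀ ρ ∈ Set.Icc (0 : ℝ) 1, κ ρ = 0) :
    HasDerivAt (fun x => ∫ τ in (1 : ℝ)..x, (x - τ) * κ τ) 0 0 := by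
  set F : ℝ → ℝ := fun x => ∫ τ in (1 : ℝ)..x, (x - τ) * κ τ with hF
  have hF0 : F 0 = 0 := Fzero_aux κ hκ0 (by norm_num)
  rw [hasDerivAt_iff_tendsto_slope]
  rw [← nhdsLT_sup_nhdsGT, tendsto_sup]
  constructor
  · -- left limit
    by_cases hcase : ∃ δ > (0:ℝ), IntegrableOn κ (Set.Ioc (-δ) 0) volume
    · obtain ⟨δ, hδ, hint⟩ := hcase
      -- integrable on Icc
      have hintIcc : IntegrableOn (fun t => |κ t|) (Set.Icc (-δ) 0) volume := by
        rw [integrableOn_Icc_iff_integrableOn_Ioc]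
        exact hint.norm
      set g : ℝ → ℝ := fun x => ∫ t in x..(0:ℝ), |κ t| with hg
      have hgc : ContinuousOn g (Set.uIcc (-δ) 0) := by
        apply continuousOn_primitive_interval_left
        rwa [Set.uIcc_of_le (by linarith)]
      have hg0 : g 0 = 0 := by simp [hg]
      have hgt : Tendsto g (nhdsWithin 0 (Set.Iio 0)) (nhds 0) := by
        have h1 : Tendsto g (nhdsWithin 0 (Set.uIcc (-δ) 0)) (nhds 0) := by
          have := hgc.continuousWithinAt (x := 0)
            (by rw [Set.uIcc_of_le (by linarith : (-δ:ℝ) ≤ 0)]; exact ⟨by linarith, le_rfl⟩)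
          rwa [ContinuousWithinAt, hg0] at this
        have h2 : nhdsWithin (0:ℝ) (Set.Iio 0) = nhdsWithin 0 (Set.Ioo (-δ) 0) :=
          (nhdsWithin_Ioo_eq_nhdsLT (by linarith)).symm
        rw [h2]
        exact h1.mono_left (nhdsWithin_mono _ (by
          rw [Set.uIcc_of_le (by linarith : (-δ:ℝ) ≤ 0)]
          exact Set.Ioo_subset_Icc_self))
      apply squeeze_zero_norm' _ hgt
      filter_upwards [Ioo_mem_nhdsLT_of_mem (⟨by linarith, le_rfl⟩ : (0:ℝ) ∈ Set.Ioc (-δ) 0)]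
        with x hx
      obtain ⟨hxδ, hx0⟩ := hx
      -- integrability of integrand on [x,0]
      have hκx : IntegrableOn κ (Set.Ioc x 0) volume :=
        hint.mono_set (Set.Ioc_subset_Ioc_left (by linarith))
      have hfx : IntegrableOn (fun t => (x - t) * κ t) (Set.Ioc x 0) volume := by
        apply Integrable.bdd_mul (c := |x|) hκx
          ((by fun_prop : Continuous fun t : ℝ => x - t).aestronglyMeasurable)
        rw [ae_restrict_iff' measurableSet_Ioc]
        refine ae_of_all _ fun t ht => ?_
        rw [Real.norm_eq_abs, abs_sub_comm, abs_of_nonneg (by linarith [ht.1] : (0:ℝ) ≤ t - x),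
          abs_of_nonpos (le_of_lt hx0)]
        linarith [ht.2]
      have hII : IntervalIntegrable (fun t => (x - t) * κ t) volume x 0 := by
        rw [intervalIntegrable_iff_integrableOn_Ioc_of_le (le_of_lt hx0)]
        exact hfx
      have hII2 : IntervalIntegrable (fun t => (x - t) * κ t) volume 0 1 := by
        rw [intervalIntegrable_iff_integrableOn_Ioc_of_le zero_le_one]
        rw [integrableOn_congr_fun (g := fun _ => (0:ℝ))
          (fun t ht => by simp [hκ0 t ⟨le_of_lt ht.1, ht.2⟩]) measurableSet_Ioc]
        simp
      -- F x = - ∫ x..0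
      have hsplit : F x = -∫ t in x..(0:ℝ), (x - t) * κ t := by
        have h01 : (∫ t in (0:ℝ)..1, (x - t) * κ t) = 0 := by
          rw [intervalIntegral.integral_congr (g := fun _ => (0:ℝ))]
          · simp
          · intro t ht
            rw [Set.uIcc_of_le zero_le_one] at ht
            simp [hκ0 t ht]
        have := intervalIntegral.integral_add_adjacent_intervals hII hII2
        rw [hF]
        simp only []
        rw [intervalIntegral.integral_symm]
        rw [← this, h01, add_zero]
      -- bound
      have hbound : ‖F x‖ ≤ |x| * g x := by
        rw [hsplit, norm_neg]
        calc ‖∫ t in x..(0:ℝ), (x - t) * κ t‖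
            ≤ ∫ t in x..(0:ℝ), ‖(x - t) * κ t‖ :=
              intervalIntegral.norm_integral_le_integral_norm (le_of_lt hx0)
          _ ≤ ∫ t in x..(0:ℝ), |x| * |κ t| := by
              apply intervalIntegral.integral_mono_on (le_of_lt hx0)
              · exact hII.norm
              · apply IntervalIntegrable.const_mul
                rw [intervalIntegrable_iff_integrableOn_Ioc_of_le (le_of_lt hx0)]
                exact hκx.norm
              · intro t ht
                rw [Real.norm_eq_abs, abs_mul]
                apply mul_le_mul_of_nonneg_right _ (abs_nonneg _)
                rw [abs_sub_comm, abs_of_nonneg (by linarith [ht.1] : (0:ℝ) ≤ t - x),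
                  abs_of_nonpos (le_of_lt hx0)]
                linarith [ht.2]
          _ = |x| * g x := intervalIntegral.integral_const_mul _ _
      have hxne : x ≠ 0 := ne_of_lt hx0
      rw [slope_def_field, hF0, sub_zero, sub_zero, norm_div]
      rw [div_le_iff₀ (by rwa [Real.norm_eq_abs, abs_pos])]
      calc ‖F x‖ ≤ |x| * g x := hbound
        _ = g x * ‖x‖ := by rw [Real.norm_eq_abs]; ring
    · -- non-integrable case: F vanishes on negatives
      push_neg at hcase
      have hFneg : ∀ x < (0:ℝ), F x = 0 := by
        intro x hx0
        apply intervalIntegral.integral_undef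
        intro hI
        have hI2 : IntegrableOn (fun t => (x - t) * κ t) (Set.Ioc x 1) volume := by
          have := hI.symm
          rwa [intervalIntegrable_iff_integrableOn_Ioc_of_le (by linarith)] at this
        have hI3 : IntegrableOn (fun t => (x - t) * κ t) (Set.Ioc (x/2) 0) volume :=
          hI2.mono_set (Set.Ioc_subset_Ioc (by linarith) zero_le_one)
        have hxlt : ∀ t ∈ Set.Ioc (x/2) (0:ℝ), x - t ≠ 0 := by
          intro t ht
          have : x < t := lt_of_lt_of_le (by linarith) (le_of_lt ht.1)
          exact ne_of_lt (by linarith)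
        have hκI : IntegrableOn κ (Set.Ioc (x/2) 0) volume := by
          rw [integrableOn_congr_fun (g := fun t => (x - t)⁻¹ * ((x - t) * κ t))
            (fun t ht => (inv_mul_cancel_left₀ (hxlt t ht) (κ t)).symm) measurableSet_Ioc]
          apply Integrable.bdd_mul (c := (-x/2)⁻¹) hI3
          · apply ContinuousOn.aestronglyMeasurable _ measurableSet_Ioc
            apply ContinuousOn.inv₀
            · exact (continuous_const.sub continuous_id).continuousOn
            · exact hxlt
          · rw [ae_restrict_iff' measurableSet_Ioc]
            refine ae_of_all _ fun t ht => ?_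
            rw [Real.norm_eq_abs, abs_inv]
            apply inv_anti₀ (by linarith)
            rw [abs_sub_comm, abs_of_nonneg (by linarith [ht.1, hxlt t ht] : (0:ℝ) ≤ t - x)]
            linarith [ht.1]
        exact hcase (-x/2) (by linarith) (by rw [show -(-x/2) = x/2 by ring]; exact hκI)
      apply Tendsto.congr' _ tendsto_const_nhds
      filter_upwards [eventually_mem_nhdsWithin] with x (hx : x ∈ Set.Iio 0)
      rw [slope_def_field, hFneg x hx, hF0]; simp
  · -- right limit : F = 0 on (0,1)
    apply Tendsto.congr' _ tendsto_const_nhds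
    filter_upwards [Ioo_mem_nhdsGT_of_mem (⟨le_rfl, zero_lt_one⟩ : (0:ℝ) ∈ Set.Ico 0 1)]
      with x hx
    rw [slope_def_field, show F x = 0 from Fzero_aux κ hκ0 ⟨le_of_lt hx.1, le_of_lt hx.2⟩, hF0]; simp

lemma Fderiv_pos (R : ℝ) (hR : 1 < R) (κ : ℝ → ℝ)
    (hκcont : ContinuousOn κ (Set.Ico 0 R)) {p : ℝ} (hp : p ∈ Set.Ioo (0 : ℝ) R) :
    HasDerivAt (fun x => ∫ τ in (1 : ℝ)..x, (x - τ) * κ τ)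
      (∫ τ in (1 : ℝ)..p, κ τ) p := by
  have hopen : IsOpen (Set.Ioo (0:ℝ) R) := isOpen_Ioo
  have hcont : ContinuousOn κ (Set.Ioo (0:ℝ) R) := hκcont.mono Set.Ioo_subset_Ico_self
  have hsub : ∀ x ∈ Set.Ioo (0:ℝ) R, Set.uIcc (1:ℝ) x ⊆ Set.Ioo (0:ℝ) R := by
    intro x hx t ht
    rw [Set.uIcc_eq_union] at ht
    rcases ht with ht | ht
    · exact ⟨lt_of_lt_of_le zero_lt_one ht.1, lt_of_le_of_lt ht.2 hx.2⟩
    · exact ⟨lt_of_lt_of_le hx.1 ht.1, lt_of_le_of_lt ht.2 hR⟩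
  have hA : HasDerivAt (fun x => ∫ τ in (1:ℝ)..x, κ τ) (κ p) p := by
    apply intervalIntegral.integral_hasDerivAt_right
    · exact (hcont.mono (hsub p hp)).intervalIntegrable
    · exact ContinuousOn.stronglyMeasurableAtFilter hopen hcont p hp
    · exact hcont.continuousAt (hopen.mem_nhds hp)
  have hB : HasDerivAt (fun x => ∫ τ in (1:ℝ)..x, τ * κ τ) (p * κ p) p := by
    apply intervalIntegral.integral_hasDerivAt_right
    · exact ((continuousOn_id.mul hcont).mono (hsub p hp)).intervalIntegrable
    · exact ContinuousOn.stronglyMeasurableAtFilter hopen (continuousOn_id.mul hcont) p hp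
    · exact (continuousOn_id.mul hcont).continuousAt (hopen.mem_nhds hp)
  have hG : HasDerivAt
      (fun x => x * (∫ τ in (1:ℝ)..x, κ τ) - ∫ τ in (1:ℝ)..x, τ * κ τ)
      ((∫ τ in (1:ℝ)..p, κ τ)) p := by
    have := ((hasDerivAt_id p).mul hA).sub hB
    refine this.congr_deriv ?_
    simp [id]
  apply hG.congr_of_eventuallyEq
  filter_upwards [hopen.mem_nhds hp] with x hx
  have h1 : IntervalIntegrable κ volume 1 x := (hcont.mono (hsub x hx)).intervalIntegrable
  have h2 : IntervalIntegrable (fun τ => τ * κ τ) volume 1 x :=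
    ((continuousOn_id.mul hcont).mono (hsub x hx)).intervalIntegrable
  show (∫ τ in (1:ℝ)..x, (x - τ) * κ τ) = _
  rw [show (∫ τ in (1:ℝ)..x, (x - τ) * κ τ)
      = ∫ τ in (1:ℝ)..x, (x * κ τ - τ * κ τ) from
    intervalIntegral.integral_congr (fun t _ => by ring)]
  rw [intervalIntegral.integral_sub (h1.const_mul x) h2,
    intervalIntegral.integral_const_mul]

lemma Fderiv (R : ℝ) (hR : 1 < R) (κ : ℝ → ℝ)
    (hκcont : ContinuousOn κ (Set.Ico 0 R))
    (hκ0 : ∀ ρ ∈ Set.Icc (0 : ℝ) 1, κ ρ = 0) {p : ℝ} (hp : p ∈ Set.Ico (0 : ℝ) R) :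
    HasDerivAt (fun x => ∫ τ in (1 : ℝ)..x, (x - τ) * κ τ)
      (∫ τ in (1 : ℝ)..p, κ τ) p := by
  rcases eq_or_lt_of_le hp.1 with h0 | h0
  · have hz : (∫ τ in (1:ℝ)..p, κ τ) = 0 := by
      rw [← h0]
      rw [intervalIntegral.integral_congr (g := fun _ => (0:ℝ))]
      · simp
      · intro t ht
        rw [Set.uIcc_comm, Set.uIcc_of_le zero_le_one] at ht
        exact hκ0 t ht
    rw [hz, ← h0]
    exact Fderiv_zero κ hκ0
  · exact Fderiv_pos R hR κ hκcont ⟨h0, hp.2⟩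

theorem entropy_first_order_dissipation (R b δx : ℝ)
    (hR : 1 < R) (hb : 0 < b) (hδx : 0 < δx)
    (h : ℝ → ℝ) (hdiff : Differentiable ℝ h) (hmono : StrictMono h) (h0 : h 0 = 0)
    (hhrange : ∀ s, h s ∈ Set.Ioo (-1 : ℝ) b)
    (κ : ℝ → ℝ) (hκcont : ContinuousOn κ (Set.Ico 0 R))
    (hκnonneg : ∀ ρ ∈ Set.Ico (0 : ℝ) R, 0 ≤ κ ρ)
    (hκ0 : ∀ ρ ∈ Set.Icc (0 : ℝ) 1, κ ρ = 0)
    (Q Q' : ℝ → ℝ)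
    (hQ : ∀ ρ, Q ρ = ∫ τ in (1 : ℝ)..ρ, (ρ - τ) * κ τ)
    (hQ' : ∀ ρ, Q' ρ = ∫ τ in (1 : ℝ)..ρ, κ τ)
    (ρ : ℤ → ℝ) (hρ : ∀ i, ρ i ∈ Set.Ico (0 : ℝ) R)
    (hfin : (Function.support ρ).Finite)
    (q G : ℤ → ℝ)
    (hq : ∀ i, q i = (Q' (ρ (i + 1)) - Q' (ρ i)) / δx)
    (hG : ∀ i, G i = ρ i * h (-q i))
    (f : ℝ → ℝ)
    (hf : ∀ s, f s = δx * ∑' i : ℤ, Q (ρ i + (s / δx) * (G (i - 1) - G i))) :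
    HasDerivAt f (δx * ∑' i : ℤ, ρ i * q i * h (-q i)) 0 ∧
    δx * ∑' i : ℤ, ρ i * q i * h (-q i) ≤ 0 := by
  classical
  have hQd : ∀ i : ℤ, HasDerivAt Q (Q' (ρ i)) (ρ i) := by
    intro i
    rw [funext hQ, hQ' (ρ i)]
    exact Fderiv R hR κ hκcont hκ0 (hρ i)
  have hQ0 : Q 0 = 0 := by rw [hQ]; exact Fzero_aux κ hκ0 (by norm_num)
  set S : Finset ℤ := hfin.toFinset ∪ hfin.toFinset.image (· + 1) with hS
  have hmemS : ∀ i : ℤ, i ∉ S → ρ i = 0 ∧ ρ (i - 1) = 0 := by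
    intro i hi
    obtain ⟨h1, h2⟩ := Finset.notMem_union.mp hi
    constructor
    · by_contra hne; exact h1 (hfin.mem_toFinset.mpr hne)
    · by_contra hne
      exact h2 (Finset.mem_image.mpr ⟨i - 1, hfin.mem_toFinset.mpr hne, by ring⟩)
  have hG0 : ∀ i, ρ i = 0 → G i = 0 := fun i hz => by rw [hG, hz, zero_mul]
  have hfS : ∀ s, f s = δx * ∑ i ∈ S, Q (ρ i + (s / δx) * (G (i - 1) - G i)) := by
    intro s
    rw [hf s]
    congr 1
    apply tsum_eq_sum
    intro i hi
    obtain ⟨h1, h2⟩ := hmemS i hi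
    rw [h1, hG0 _ h1, hG0 _ h2]
    simpa using hQ0
  have hderivS : HasDerivAt
      (fun s => δx * ∑ i ∈ S, Q (ρ i + (s / δx) * (G (i - 1) - G i)))
      (δx * ∑ i ∈ S, Q' (ρ i) * ((G (i - 1) - G i) / δx)) 0 := by
    apply HasDerivAt.const_mul
    apply HasDerivAt.fun_sum
    intro i _
    have hinner : HasDerivAt (fun s : ℝ => ρ i + (s / δx) * (G (i - 1) - G i))
        ((G (i - 1) - G i) / δx) 0 := by
      have h1 := ((hasDerivAt_id (0:ℝ)).div_const δx).mul_const (G (i - 1) - G i)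
      have h2 : HasDerivAt (fun s : ℝ => (s / δx) * (G (i - 1) - G i))
          ((G (i - 1) - G i) / δx) 0 := by
        refine h1.congr_deriv ?_; ring
      exact h2.const_add (ρ i)
    have houter : HasDerivAt Q (Q' (ρ i))
        ((fun s : ℝ => ρ i + (s / δx) * (G (i - 1) - G i)) 0) := by
      simpa using hQd i
    exact houter.comp 0 hinner
  have hfderiv : HasDerivAt f (δx * ∑ i ∈ S, Q' (ρ i) * ((G (i - 1) - G i) / δx)) 0 :=
    (funext hfS).symm ▸ hderivS
  have hsum_eq : ∑ i ∈ S, Q' (ρ i) * ((G (i - 1) - G i) / δx)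
      = ∑' i : ℤ, ρ i * q i * h (-q i) := by
    have huS : ∀ i ∉ S, Q' (ρ i) * ((G (i - 1) - G i) / δx) = 0 := by
      intro i hi
      obtain ⟨h1, h2⟩ := hmemS i hi
      rw [hG0 _ h1, hG0 _ h2]; ring
    rw [← tsum_eq_sum (L := SummationFilter.unconditional ℤ) huS]
    have hsa : Summable (fun i : ℤ => Q' (ρ (i + 1)) * G i / δx) :=
      summable_of_ne_finset_zero (s := hfin.toFinset) fun i hi => by
        rw [hG0 i (by by_contra hne; exact hi (hfin.mem_toFinset.mpr hne))]; ring
    have hsb : Summable (fun i : ℤ => Q' (ρ i) * G i / δx) :=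
      summable_of_ne_finset_zero (s := hfin.toFinset) fun i hi => by
        rw [hG0 i (by by_contra hne; exact hi (hfin.mem_toFinset.mpr hne))]; ring
    have hsc : Summable (fun i : ℤ => Q' (ρ i) * G (i - 1) / δx) :=
      summable_of_ne_finset_zero (s := S) fun i hi => by
        rw [hG0 _ (hmemS i hi).2]; ring
    have h1 : ∑' i : ℤ, Q' (ρ i) * ((G (i - 1) - G i) / δx)
        = (∑' i : ℤ, Q' (ρ i) * G (i - 1) / δx) - ∑' i : ℤ, Q' (ρ i) * G i / δx := by
      rw [← Summable.tsum_sub hsc hsb]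
      exact tsum_congr fun i => by ring
    have h2 : (∑' i : ℤ, Q' (ρ i) * G (i - 1) / δx)
        = ∑' i : ℤ, Q' (ρ (i + 1)) * G i / δx := by
      rw [← (Equiv.addRight (1:ℤ)).tsum_eq (fun i : ℤ => Q' (ρ i) * G (i - 1) / δx)]
      exact tsum_congr fun i => by simp
    have h3 : ((∑' i : ℤ, Q' (ρ (i + 1)) * G i / δx) - ∑' i : ℤ, Q' (ρ i) * G i / δx)
        = ∑' i : ℤ, ρ i * q i * h (-q i) := by
      rw [← Summable.tsum_sub hsa hsb]
      refine tsum_congr fun i => ?_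
      rw [hG i]
      set w := h (-q i) with hw
      rw [hq i]; ring
    rw [h1, h2, h3]
  have hnonpos : ∑' i : ℤ, ρ i * q i * h (-q i) ≤ 0 := by
    apply tsum_nonpos
    intro i
    have hρi := (hρ i).1
    have hqh : q i * h (-q i) ≤ 0 := by
      rcases le_or_gt 0 (q i) with hqi | hqi
      · have hh : h (-q i) ≤ 0 := by
          have := hmono.monotone (by linarith : -q i ≤ 0); rwa [h0] at this
        exact mul_nonpos_iff.mpr (Or.inl ⟨hqi, hh⟩)
      · have hh : 0 ≤ h (-q i) := by
          have := hmono.monotone (by linarith : (0:ℝ) ≤ -q i); rwa [h0] at this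
        exact mul_nonpos_iff.mpr (Or.inr ⟨le_of_lt hqi, hh⟩)
    calc ρ i * q i * h (-q i) = ρ i * (q i * h (-q i)) := by ring
      _ ≤ 0 := mul_nonpos_iff.mpr (Or.inl ⟨hρi, hqh⟩)
  refine ⟨?_, ?_⟩
  · rw [← hsum_eq]; exact hfderiv
  · exact mul_nonpos_iff.mpr (Or.inl ⟨le_of_lt hδx, hnonpos⟩)
end

section
/- Discrete entropy inequality: if 1 ≥ (δt/δx)(b + 2M‖h'‖_∞ max_{0≤ρ≤M}κ(ρ)/δx) and 1 ≥ δt·4M‖h'‖_∞ max_{0≤ρ≤M}κ(ρ)/(δx)², then Σᵢ Q(ρᵢ⁺) ≤ Σᵢ Q(ρᵢ) + δt·(1 − δt·4M‖h'‖_∞ max κ/(δx)²)·Σᵢ ρᵢ q_i h(−q_i) ≤ Σᵢ Q(ρᵢ). -/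
open Set intervalIntegral


private lemma aux_low (b δt δx M C K r F1 F0 : ℝ) (hδt : 0 < δt) (hδx : 0 < δx)
    (hr : 0 ≤ r) (hCFL : δt * (b * δx + 2*M*C*K) ≤ δx^2)
    (hMCK : 0 ≤ δt * (M*C*(K*r)))
    (hlb : -(M*C*(K*r)) ≤ δx * F1) (hfb : F0 ≤ b * r) :
    0 ≤ δx * r + δt * (F1 - F0) := by
  have t1 : δt * (-(M*C*(K*r))) ≤ δt * (δx * F1) := mul_le_mul_of_nonneg_left hlb hδt.le
  have t2 : δt * (δx * F0) ≤ δt * (δx * (b * r)) :=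
    mul_le_mul_of_nonneg_left (mul_le_mul_of_nonneg_left hfb hδx.le) hδt.le
  have t3 : δt * (b * δx + 2*M*C*K) * r ≤ δx^2 * r := mul_le_mul_of_nonneg_right hCFL hr
  have key : 0 ≤ δx * (δx * r + δt * (F1 - F0)) := by nlinarith [t1, t2, t3, hMCK]
  nlinarith [key, hδx]

private lemma aux_up (b δt δx M C K r F1 F0 : ℝ) (hδt : 0 < δt) (hδx : 0 < δx)
    (hb : 0 < b) (hr : 0 ≤ r) (hrM : r ≤ M)
    (hCFL : δt * (b * δx + 2*M*C*K) ≤ δx^2)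
    (hub : δx * F1 ≤ M*C*(K*(M - r))) (hnub : -(δx * F0) ≤ M*C*(K*(M - r))) :
    δx * r + δt * (F1 - F0) ≤ M * δx := by
  have t1 : δt * (δx * F1) ≤ δt * (M*C*(K*(M - r))) := mul_le_mul_of_nonneg_left hub hδt.le
  have t2 : δt * (-(δx * F0)) ≤ δt * (M*C*(K*(M - r))) := mul_le_mul_of_nonneg_left hnub hδt.le
  have t3 : δt * (b*δx + 2*M*C*K) * (M - r) ≤ δx^2 * (M - r) :=
    mul_le_mul_of_nonneg_right hCFL (by linarith)
  have t4 : 0 ≤ δt * (b * δx) * (M - r) :=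
    mul_nonneg (mul_nonneg hδt.le (mul_nonneg hb.le hδx.le)) (by linarith)
  have key : δx * (δx * r + δt * (F1 - F0)) ≤ δx * (M * δx) := by
    nlinarith [t1, t2, t3, t4]
  nlinarith [key, hδx]

set_option maxHeartbeats 1000000 in
theorem discrete_entropy_inequality (R b M δt δx C K : ℝ)
    (hR : 1 < R) (hb : 0 < b) (hδt : 0 < δt) (hδx : 0 < δx) (hMR : M < R)
    (h : ℝ → ℝ) (hdiff : Differentiable ℝ h) (hmono : Monotone h) (h0 : h 0 = 0)
    (hhrange : ∀ s, h s ∈ Set.Ioo (-1 : ℝ) b)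
    (hC : ∀ s, |deriv h s| ≤ C)
    (κ : ℝ → ℝ) (hκcont : ContinuousOn κ (Set.Ico 0 R))
    (hκnonneg : ∀ ρ ∈ Set.Ico (0 : ℝ) R, 0 ≤ κ ρ)
    (hκ0 : ∀ ρ ∈ Set.Icc (0 : ℝ) 1, κ ρ = 0)
    (hK : IsGreatest (κ '' Set.Icc (0 : ℝ) M) K)
    (Q Q' : ℝ → ℝ)
    (hQ : ∀ ρ, Q ρ = ∫ τ in (1 : ℝ)..ρ, (ρ - τ) * κ τ)
    (hQ' : ∀ ρ, Q' ρ = ∫ τ in (1 : ℝ)..ρ, κ τ)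
    (ρ : ℤ → ℝ) (hρ : ∀ i, ρ i ∈ Set.Icc (0 : ℝ) M)
    (hMsup : IsLUB (Set.range ρ) M)
    (hfin : (Function.support ρ).Finite)
    (q : ℤ → ℝ) (hq : ∀ i, q i = (Q' (ρ (i + 1)) - Q' (ρ i)) / δx)
    (ρplus : ℤ → ℝ)
    (hplus : ∀ i, ρplus i = ρ i + (δt / δx) * (ρ (i - 1) * h (-q (i - 1)) - ρ i * h (-q i)))
    (hCFL1 : 1 ≥ (δt / δx) * (b + 2 * M * C * K / δx))
    (hCFL2 : 1 ≥ δt * (4 * M * C * K) / δx ^ 2) :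
    ∑' i : ℤ, Q (ρplus i)
      ≤ ∑' i : ℤ, Q (ρ i)
        + δt * (1 - δt * (4 * M * C * K) / δx ^ 2) * ∑' i : ℤ, ρ i * q i * h (-q i) ∧
    ∑' i : ℤ, Q (ρ i)
        + δt * (1 - δt * (4 * M * C * K) / δx ^ 2) * ∑' i : ℤ, ρ i * q i * h (-q i)
      ≤ ∑' i : ℤ, Q (ρ i) := by
  classical
  have hδx' : δx ≠ 0 := ne_of_gt hδx
  have hM0 : 0 ≤ M := le_trans (hρ 0).1 (hρ 0).2
  have hC0 : 0 ≤ C := le_trans (abs_nonneg _) (hC 0)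
  have hIcoIcc : Set.Icc (0:ℝ) M ⊆ Set.Ico 0 R := fun x hx => ⟨hx.1, lt_of_le_of_lt hx.2 hMR⟩
  have h1m : (1:ℝ) ∈ Set.Ico 0 R := ⟨zero_le_one, hR⟩
  have hMIcc : M ∈ Set.Icc (0:ℝ) M := right_mem_Icc.mpr hM0
  have h0Icc : (0:ℝ) ∈ Set.Icc (0:ℝ) M := left_mem_Icc.mpr hM0
  have hK0 : 0 ≤ K := by
    obtain ⟨x, hx, hxK⟩ := hK.1
    exact hxK ▸ hκnonneg x (hIcoIcc hx)
  have hKb : ∀ x ∈ Set.Icc (0:ℝ) M, κ x ≤ K := fun x hx => hK.2 ⟨x, hx, rfl⟩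
  -- Lipschitz property of h
  have hlip : ∀ x y : ℝ, |h x - h y| ≤ C * |x - y| := by
    intro x y
    have := Convex.norm_image_sub_le_of_norm_deriv_le (f := h) (s := Set.univ)
      (fun z _ => hdiff z) (fun z _ => by rw [Real.norm_eq_abs]; exact hC z)
      convex_univ (Set.mem_univ y) (Set.mem_univ x)
    simpa [Real.norm_eq_abs] using this
  have hhabs : ∀ s, |h s| ≤ C * |s| := by
    intro s; have := hlip s 0; simpa [h0] using this
  -- integrability facts
  have hκint : ∀ a b' : ℝ, a ∈ Set.Ico 0 R → b' ∈ Set.Ico 0 R →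
      IntervalIntegrable κ MeasureTheory.volume a b' := by
    intro a b' ha hb'
    exact (hκcont.mono (Set.ordConnected_Ico.uIcc_subset ha hb')).intervalIntegrable
  have hκint2 : ∀ x a b' : ℝ, a ∈ Set.Ico 0 R → b' ∈ Set.Ico 0 R →
      IntervalIntegrable (fun τ => (x - τ) * κ τ) MeasureTheory.volume a b' := by
    intro x a b' ha hb'
    exact (((continuousOn_const.sub continuousOn_id).mul hκcont).mono
      (Set.ordConnected_Ico.uIcc_subset ha hb')).intervalIntegrable
  -- Q' facts
  have hQ'sub : ∀ x y : ℝ, x ∈ Set.Ico 0 R → y ∈ Set.Ico 0 R →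
      Q' y - Q' x = ∫ τ in x..y, κ τ := by
    intro x y hx hy
    rw [hQ', hQ']
    exact integral_interval_sub_left (hκint 1 y h1m hy) (hκint 1 x h1m hx)
  have hQ'mono : ∀ x y : ℝ, x ∈ Set.Icc 0 M → y ∈ Set.Icc 0 M → x ≤ y → Q' x ≤ Q' y := by
    intro x y hx hy hxy
    have he := hQ'sub x y (hIcoIcc hx) (hIcoIcc hy)
    have hn : 0 ≤ ∫ τ in x..y, κ τ :=
      intervalIntegral.integral_nonneg hxy
        (fun u hu => hκnonneg u (hIcoIcc ⟨le_trans hx.1 hu.1, le_trans hu.2 hy.2⟩))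
    linarith
  have hQ'lip : ∀ x y : ℝ, x ∈ Set.Icc 0 M → y ∈ Set.Icc 0 M → x ≤ y →
      Q' y - Q' x ≤ K * (y - x) := by
    intro x y hx hy hxy
    rw [hQ'sub x y (hIcoIcc hx) (hIcoIcc hy)]
    calc ∫ τ in x..y, κ τ ≤ ∫ _τ in x..y, K := by
          apply intervalIntegral.integral_mono_on hxy
            (hκint x y (hIcoIcc hx) (hIcoIcc hy)) intervalIntegrable_const
          intro τ hτ; exact hKb τ ⟨le_trans hx.1 hτ.1, le_trans hτ.2 hy.2⟩
      _ = K * (y - x) := by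
          rw [intervalIntegral.integral_const, smul_eq_mul, mul_comm]
  have habsQ' : ∀ u v : ℝ, u ∈ Set.Icc 0 M → v ∈ Set.Icc 0 M →
      |Q' u - Q' v| ≤ K * |u - v| := by
    intro u v hu hv
    rcases le_total u v with huv | hvu
    · rw [abs_sub_comm, abs_of_nonneg (by linarith [hQ'mono u v hu hv huv]),
        abs_sub_comm, abs_of_nonneg (by linarith)]
      exact hQ'lip u v hu hv huv
    · rw [abs_of_nonneg (by linarith [hQ'mono v u hv hu hvu]), abs_of_nonneg (by linarith)]
      exact hQ'lip v u hv hu hvu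
  have hQ'0 : Q' 0 = 0 := by
    rw [hQ', intervalIntegral.integral_symm]
    have he : ∫ τ in (0:ℝ)..1, κ τ = ∫ _τ in (0:ℝ)..1, (0:ℝ) :=
      integral_congr (fun τ hτ => hκ0 τ (by
        rwa [Set.uIcc_of_le zero_le_one] at hτ))
    rw [he]; simp
  have hQzero : Q 0 = 0 := by
    rw [hQ, intervalIntegral.integral_symm]
    have he : ∫ τ in (0:ℝ)..1, (0 - τ) * κ τ = ∫ _τ in (0:ℝ)..1, (0:ℝ) :=
      integral_congr (fun τ hτ => by
        rw [Set.uIcc_of_le zero_le_one] at hτ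
        simp [hκ0 τ hτ])
    rw [he]; simp
  -- convexity inequality
  have hconv : ∀ x y : ℝ, x ∈ Set.Icc 0 M → y ∈ Set.Icc 0 M →
      Q y - Q x ≤ Q' y * (y - x) := by
    intro x y hx hy
    have hxR := hIcoIcc hx
    have hyR := hIcoIcc hy
    have key : Q y - Q x - Q' y * (y - x) = ∫ τ in x..y, (x - τ) * κ τ := by
      rw [hQ, hQ, hQ']
      have e1 : (∫ τ in (1:ℝ)..y, κ τ) * (y - x) = ∫ τ in (1:ℝ)..y, κ τ * (y - x) :=
        (integral_mul_const _ _).symm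
      have e2 : (∫ τ in (1:ℝ)..y, (y - τ) * κ τ) - ∫ τ in (1:ℝ)..y, κ τ * (y - x)
          = ∫ τ in (1:ℝ)..y, (x - τ) * κ τ := by
        rw [← intervalIntegral.integral_sub (hκint2 y 1 y h1m hyR)
          ((hκint 1 y h1m hyR).mul_const _)]
        apply integral_congr; intro τ _; ring
      have e3 : (∫ τ in (1:ℝ)..y, (x - τ) * κ τ) - ∫ τ in (1:ℝ)..x, (x - τ) * κ τ
          = ∫ τ in x..y, (x - τ) * κ τ :=
        integral_interval_sub_left (hκint2 x 1 y h1m hyR) (hκint2 x 1 x h1m hxR)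
      linarith
    have hle : (∫ τ in x..y, (x - τ) * κ τ) ≤ 0 := by
      rcases le_total x y with hxy | hyx
      · have : 0 ≤ ∫ τ in x..y, -((x - τ) * κ τ) := by
          apply intervalIntegral.integral_nonneg hxy
          intro u hu
          have hκu : 0 ≤ κ u := hκnonneg u (hIcoIcc ⟨le_trans hx.1 hu.1, le_trans hu.2 hy.2⟩)
          nlinarith [hu.1]
        rw [intervalIntegral.integral_neg] at this
        linarith
      · rw [intervalIntegral.integral_symm]
        have : 0 ≤ ∫ τ in y..x, (x - τ) * κ τ := by
          apply intervalIntegral.integral_nonneg hyx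
          intro u hu
          have hκu : 0 ≤ κ u := hκnonneg u (hIcoIcc ⟨le_trans hy.1 hu.1, le_trans hu.2 hx.2⟩)
          nlinarith [hu.2]
        linarith
    linarith
  -- CFL conditions, cleared of denominators
  have hCFL1' : δt * (b * δx + 2*M*C*K) ≤ δx^2 := by
    have h1 : (δt / δx) * (b + 2*M*C*K/δx) * δx^2 ≤ 1 * δx^2 :=
      mul_le_mul_of_nonneg_right hCFL1 (by positivity)
    have h2 : (δt / δx) * (b + 2*M*C*K/δx) * δx^2 = δt * (b*δx + 2*M*C*K) := by
      field_simp
    linarith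
  -- the flux F
  set F : ℤ → ℝ := fun i => ρ i * h (-q i) with hFdef
  have hFi : ∀ i, F i = ρ i * h (-q i) := fun _ => rfl
  -- bounds on δx * q i
  have hqd : ∀ i, δx * q i = Q' (ρ (i+1)) - Q' (ρ i) := by
    intro i; rw [hq, mul_comm, div_mul_cancel₀ _ hδx']
  have hqa : ∀ i, δx * q i ≤ K * (M - ρ i) := by
    intro i; rw [hqd]
    have l1 : Q' (ρ (i+1)) ≤ Q' M := hQ'mono _ _ (hρ (i+1)) hMIcc (hρ (i+1)).2
    have l2 : Q' M - Q' (ρ i) ≤ K * (M - ρ i) := by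
      have := hQ'lip (ρ i) M (hρ i) hMIcc (hρ i).2; linarith
    linarith
  have hqc : ∀ i, δx * q i ≤ K * ρ (i+1) := by
    intro i; rw [hqd]
    have l1 : Q' 0 ≤ Q' (ρ i) := hQ'mono _ _ h0Icc (hρ i) (hρ i).1
    have l2 : Q' (ρ (i+1)) - Q' 0 ≤ K * (ρ (i+1) - 0) :=
      hQ'lip 0 (ρ (i+1)) h0Icc (hρ (i+1)) (hρ (i+1)).1
    have l3 : K * (ρ (i+1) - 0) = K * ρ (i+1) := by ring
    linarith
  have hqd' : ∀ i, -(δx * q i) ≤ K * (M - ρ (i+1)) := by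
    intro i; rw [hqd]
    have l1 : Q' (ρ i) ≤ Q' M := hQ'mono _ _ (hρ i) hMIcc (hρ i).2
    have l2 : Q' M - Q' (ρ (i+1)) ≤ K * (M - ρ (i+1)) :=
      hQ'lip (ρ (i+1)) M (hρ (i+1)) hMIcc (hρ (i+1)).2
    linarith
  -- pointwise facts about F
  have hFb : ∀ i, F i ≤ b * ρ i := by
    intro i; rw [hFi]
    have h1 := (hhrange (-q i)).2
    have h2 := (hρ i).1
    nlinarith
  have hFub : ∀ i, δx * F i ≤ M*C*(K*(M - ρ (i+1))) := by
    intro i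
    have hr1 := (hρ i).1; have hr2 := (hρ i).2
    have hr3 := (hρ (i+1)).2
    rcases le_or_gt 0 (q i) with hq0 | hq0
    · have hh : h (-q i) ≤ 0 := by rw [← h0]; exact hmono (by linarith)
      have hf : F i ≤ 0 := by rw [hFi]; exact mul_nonpos_of_nonneg_of_nonpos hr1 hh
      have : 0 ≤ M*C*(K*(M - ρ (i+1))) := by
        apply mul_nonneg (mul_nonneg hM0 hC0) (mul_nonneg hK0 (by linarith))
      nlinarith [hδx.le]
    · have hh2 : h (-q i) ≤ C * (-q i) := by
        calc h (-q i) ≤ |h (-q i)| := le_abs_self _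
          _ ≤ C * |(-q i)| := hhabs _
          _ = C * (-q i) := by rw [abs_of_pos (by linarith : (0:ℝ) < -q i)]
      have hcq : 0 ≤ C * (-q i) := mul_nonneg hC0 (by linarith)
      have t1 : ρ i * h (-q i) ≤ M * (C * (-q i)) :=
        le_trans (mul_le_mul_of_nonneg_left hh2 hr1) (mul_le_mul_of_nonneg_right hr2 hcq)
      have t1' : δx * (ρ i * h (-q i)) ≤ δx * (M * (C * (-q i))) :=
        mul_le_mul_of_nonneg_left t1 hδx.le
      have t2 : δx * (M * (C * (-q i))) = M*C*(-(δx * q i)) := by ring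
      have t3 : M*C*(-(δx * q i)) ≤ M*C*(K*(M - ρ (i+1))) :=
        mul_le_mul_of_nonneg_left (hqd' i) (mul_nonneg hM0 hC0)
      rw [hFi]; linarith
  have hnFub : ∀ i, -(δx * F i) ≤ M*C*(K*(M - ρ i)) := by
    intro i
    have hr1 := (hρ i).1; have hr2 := (hρ i).2
    rcases le_or_gt (q i) 0 with hq0 | hq0
    · have hh : 0 ≤ h (-q i) := by rw [← h0]; exact hmono (by linarith)
      have hf : 0 ≤ F i := by rw [hFi]; exact mul_nonneg hr1 hh
      have : 0 ≤ M*C*(K*(M - ρ i)) := by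
        apply mul_nonneg (mul_nonneg hM0 hC0) (mul_nonneg hK0 (by linarith))
      nlinarith [hδx.le]
    · have hh2 : -h (-q i) ≤ C * q i := by
        calc -h (-q i) ≤ |h (-q i)| := neg_le_abs _
          _ ≤ C * |(-q i)| := hhabs _
          _ = C * q i := by rw [abs_neg, abs_of_pos hq0]
      have hcq : 0 ≤ C * q i := mul_nonneg hC0 hq0.le
      have t1 : ρ i * (-h (-q i)) ≤ M * (C * q i) :=
        le_trans (mul_le_mul_of_nonneg_left hh2 hr1) (mul_le_mul_of_nonneg_right hr2 hcq)
      have t1' : δx * (ρ i * (-h (-q i))) ≤ δx * (M * (C * q i)) :=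
        mul_le_mul_of_nonneg_left t1 hδx.le
      have t2 : δx * (M * (C * q i)) = M*C*(δx * q i) := by ring
      have t3 : M*C*(δx * q i) ≤ M*C*(K*(M - ρ i)) :=
        mul_le_mul_of_nonneg_left (hqa i) (mul_nonneg hM0 hC0)
      have : δx * (ρ i * (-h (-q i))) = -(δx * F i) := by rw [hFi]; ring
      linarith
  have hFlb : ∀ i, -(M*C*(K* ρ (i+1))) ≤ δx * F i := by
    intro i
    have hr1 := (hρ i).1; have hr2 := (hρ i).2
    have hr3 := (hρ (i+1)).1
    rcases le_or_gt (q i) 0 with hq0 | hq0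
    · have hh : 0 ≤ h (-q i) := by rw [← h0]; exact hmono (by linarith)
      have hf : 0 ≤ F i := by rw [hFi]; exact mul_nonneg hr1 hh
      have : 0 ≤ M*C*(K* ρ (i+1)) := mul_nonneg (mul_nonneg hM0 hC0) (mul_nonneg hK0 hr3)
      nlinarith [hδx.le]
    · have hh2 : -h (-q i) ≤ C * q i := by
        calc -h (-q i) ≤ |h (-q i)| := neg_le_abs _
          _ ≤ C * |(-q i)| := hhabs _
          _ = C * q i := by rw [abs_neg, abs_of_pos hq0]
      have hcq : 0 ≤ C * q i := mul_nonneg hC0 hq0.le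
      have t1 : ρ i * (-h (-q i)) ≤ M * (C * q i) :=
        le_trans (mul_le_mul_of_nonneg_left hh2 hr1) (mul_le_mul_of_nonneg_right hr2 hcq)
      have t1' : δx * (ρ i * (-h (-q i))) ≤ δx * (M * (C * q i)) :=
        mul_le_mul_of_nonneg_left t1 hδx.le
      have t2 : δx * (M * (C * q i)) = M*C*(δx * q i) := by ring
      have t3 : M*C*(δx * q i) ≤ M*C*(K* ρ (i+1)) :=
        mul_le_mul_of_nonneg_left (hqc i) (mul_nonneg hM0 hC0)
      have t4 : δx * (ρ i * (-h (-q i))) = -(δx * F i) := by rw [hFi]; ring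
      linarith
  have hFabs : ∀ i, |F i| ≤ M * C * |q i| := by
    intro i
    rw [hFi, abs_mul]
    calc |ρ i| * |h (-q i)| ≤ M * (C * |q i|) := by
          apply mul_le_mul (by rw [abs_of_nonneg (hρ i).1]; exact (hρ i).2)
            (by simpa [abs_neg] using hhabs (-q i)) (abs_nonneg _) hM0
      _ = M * C * |q i| := by ring
  have hG : ∀ i, q i * F i ≤ 0 := by
    intro i
    rcases le_total 0 (q i) with hq0 | hq0
    · have hh : h (-q i) ≤ 0 := by rw [← h0]; exact hmono (by linarith)
      have hf : F i ≤ 0 := by rw [hFi]; exact mul_nonpos_of_nonneg_of_nonpos (hρ i).1 hh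
      exact mul_nonpos_of_nonneg_of_nonpos hq0 hf
    · have hh : 0 ≤ h (-q i) := by rw [← h0]; exact hmono (by linarith)
      have hf : 0 ≤ F i := by rw [hFi]; exact mul_nonneg (hρ i).1 hh
      exact mul_nonpos_of_nonpos_of_nonneg hq0 hf
  have hFsq : ∀ i, F i^2 ≤ M*C*(-(q i * F i)) := by
    intro i
    have h1 := hFabs i
    have h2 : |q i * F i| = -(q i * F i) := abs_of_nonpos (hG i)
    have h3 : F i^2 = |F i| * |F i| := by rw [abs_mul_abs_self]; ring
    calc F i^2 = |F i| * |F i| := h3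
      _ ≤ (M * C * |q i|) * |F i| := mul_le_mul_of_nonneg_right h1 (abs_nonneg _)
      _ = M*C*|q i * F i| := by rw [abs_mul (q i) (F i)]; ring
      _ = M*C*(-(q i * F i)) := by rw [h2]
  -- ρplus stays in [0, M]
  have hdiffi : ∀ i, ρplus i - ρ i = (δt/δx) * (F (i-1) - F i) := by
    intro i; rw [hplus i, ← hFi (i-1), ← hFi i]; ring
  have hρplusmem : ∀ i, ρplus i ∈ Set.Icc (0:ℝ) M := by
    intro i
    have hd2 : (ρplus i - ρ i) * δx = δt * (F (i-1) - F i) := by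
      rw [hdiffi i]; field_simp
    have e : ρplus i = (δx * ρ i + δt * (F (i-1) - F i)) / δx := by
      rw [eq_div_iff hδx']
      linear_combination hd2
    have hlb := hFlb (i-1); rw [sub_add_cancel] at hlb
    have hub := hFub (i-1); rw [sub_add_cancel] at hub
    have hnub := hnFub i
    have hfb := hFb i
    have hr1 := (hρ i).1; have hr2 := (hρ i).2
    have hMCK : 0 ≤ δt * (M*C*(K*ρ i)) := by positivity
    constructor
    · rw [e]
      apply div_nonneg _ hδx.le
      exact aux_low b δt δx M C K (ρ i) (F (i-1)) (F i) hδt hδx hr1 hCFL1' hMCK hlb hfb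
    · rw [e, div_le_iff₀ hδx]
      exact aux_up b δt δx M C K (ρ i) (F (i-1)) (F i) hδt hδx hb hr1 hr2 hCFL1' hub hnub
  -- deviation bound
  have hdev : ∀ j, |ρplus j - ρ j| ≤ (δt/δx) * (|F (j-1)| + |F j|) := by
    intro j
    rw [hdiffi j, abs_mul, abs_of_pos (div_pos hδt hδx)]
    exact mul_le_mul_of_nonneg_left (abs_sub _ _) (div_pos hδt hδx).le
  -- the error term E
  set E : ℤ → ℝ := fun i => (Q' (ρplus (i+1)) - Q' (ρ (i+1))) - (Q' (ρplus i) - Q' (ρ i))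
    with hEdef
  have hEi : ∀ i, E i = (Q' (ρplus (i+1)) - Q' (ρ (i+1))) - (Q' (ρplus i) - Q' (ρ i)) :=
    fun _ => rfl
  have hE : ∀ i, |E i| ≤ K*(δt/δx) * (|F (i-1)| + 2*|F i| + |F (i+1)|) := by
    intro i
    have d1 : |Q' (ρplus (i+1)) - Q' (ρ (i+1))| ≤ K * |ρplus (i+1) - ρ (i+1)| :=
      habsQ' _ _ (hρplusmem _) (hρ _)
    have d2 : |Q' (ρplus i) - Q' (ρ i)| ≤ K * |ρplus i - ρ i| :=
      habsQ' _ _ (hρplusmem _) (hρ _)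
    have d3 := hdev (i+1)
    rw [add_sub_cancel_right] at d3
    have d4 := hdev i
    have tri : |E i| ≤ |Q' (ρplus (i+1)) - Q' (ρ (i+1))| + |Q' (ρplus i) - Q' (ρ i)| := by
      rw [hEi]; exact abs_sub _ _
    have m3 : K * |ρplus (i+1) - ρ (i+1)| ≤ K * ((δt/δx) * (|F i| + |F (i+1)|)) :=
      mul_le_mul_of_nonneg_left d3 hK0
    have m4 : K * |ρplus i - ρ i| ≤ K * ((δt/δx) * (|F (i-1)| + |F i|)) :=
      mul_le_mul_of_nonneg_left d4 hK0
    linarith [tri, d1, d2, m3, m4]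
  -- finite support setup
  let N : Finset ℤ := hfin.toFinset
  let T : Finset ℤ := (N ∪ N.image (· + 1)) ∪ N.image (· - 1)
  have hρzero : ∀ i, i ∉ N → ρ i = 0 := by
    intro i hi
    by_contra hne
    exact hi (hfin.mem_toFinset.mpr hne)
  have hNT : ∀ i, i ∈ N → i ∈ T := by
    intro i hi
    exact Finset.mem_union_left _ (Finset.mem_union_left _ hi)
  have hNT1 : ∀ i, i - 1 ∈ N → i ∈ T := by
    intro i hi
    apply Finset.mem_union_left _ (Finset.mem_union_right _ _)
    exact Finset.mem_image.mpr ⟨i - 1, hi, by ring⟩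
  have hNT2 : ∀ i, i + 1 ∈ N → i ∈ T := by
    intro i hi
    apply Finset.mem_union_right
    exact Finset.mem_image.mpr ⟨i + 1, hi, by ring⟩
  have hFzero : ∀ i, i ∉ N → F i = 0 := by
    intro i hi; rw [hFi, hρzero i hi, zero_mul]
  have hρpluszero : ∀ i, i ∉ T → ρplus i = 0 := by
    intro i hi
    have h1 : ρ i = 0 := hρzero i (fun hc => hi (hNT i hc))
    have h2 : F (i-1) = 0 := hFzero _ (fun hc => hi (hNT1 i hc))
    have h3 : F i = 0 := hFzero _ (fun hc => hi (hNT i hc))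
    have := hdiffi i
    rw [h2, h3, h1] at this
    simpa using this
  -- tsum reductions
  have hs1 : ∑' i : ℤ, Q (ρplus i) = ∑ i ∈ T, Q (ρplus i) :=
    tsum_eq_sum (fun i hi => by rw [hρpluszero i hi, hQzero])
  have hs2 : ∑' i : ℤ, Q (ρ i) = ∑ i ∈ T, Q (ρ i) :=
    tsum_eq_sum (fun i hi => by
      rw [hρzero i (fun hc => hi (hNT i hc)), hQzero])
  have hs3 : ∑' i : ℤ, ρ i * q i * h (-q i) = ∑ i ∈ T, ρ i * q i * h (-q i) :=
    tsum_eq_sum (fun i hi => by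
      rw [hρzero i (fun hc => hi (hNT i hc))]; ring)
  -- shift identities via tsum
  have hshift1 : ∑ i ∈ T, Q' (ρplus i) * F (i-1) = ∑ i ∈ T, Q' (ρplus (i+1)) * F i := by
    have l1 : ∑' i : ℤ, Q' (ρplus i) * F (i-1) = ∑ i ∈ T, Q' (ρplus i) * F (i-1) :=
      tsum_eq_sum (fun i hi => by
        rw [hFzero _ (fun hc => hi (hNT1 i hc)), mul_zero])
    have l2 : ∑' i : ℤ, Q' (ρplus (i+1)) * F i = ∑ i ∈ T, Q' (ρplus (i+1)) * F i :=
      tsum_eq_sum (fun i hi => by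
        rw [hFzero _ (fun hc => hi (hNT i hc)), mul_zero])
    have l3 : ∑' i : ℤ, Q' (ρplus (i+1)) * F i = ∑' i : ℤ, Q' (ρplus i) * F (i-1) := by
      have := (Equiv.addRight (1:ℤ)).tsum_eq (fun i => Q' (ρplus i) * F (i-1))
      rw [← this]
      congr 1
      funext i
      simp
    rw [← l1, ← l3, l2]
  have hshift2 : ∑ i ∈ T, F (i+1)^2 = ∑ i ∈ T, F i^2 := by
    have l1 : ∑' i : ℤ, F (i+1)^2 = ∑ i ∈ T, F (i+1)^2 :=
      tsum_eq_sum (fun i hi => by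
        rw [hFzero _ (fun hc => hi (hNT2 i hc))]; ring)
    have l2 : ∑' i : ℤ, F i^2 = ∑ i ∈ T, F i^2 :=
      tsum_eq_sum (fun i hi => by
        rw [hFzero _ (fun hc => hi (hNT i hc))]; ring)
    have l3 : ∑' i : ℤ, F (i+1)^2 = ∑' i : ℤ, F i^2 := by
      have := (Equiv.addRight (1:ℤ)).tsum_eq (fun i => F i^2)
      rw [← this]
      congr 1
    rw [← l1, l3, l2]
  have hshift3 : ∑ i ∈ T, F (i-1)^2 = ∑ i ∈ T, F i^2 := by
    have l1 : ∑' i : ℤ, F (i-1)^2 = ∑ i ∈ T, F (i-1)^2 :=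
      tsum_eq_sum (fun i hi => by
        rw [hFzero _ (fun hc => hi (hNT1 i hc))]; ring)
    have l2 : ∑' i : ℤ, F i^2 = ∑ i ∈ T, F i^2 :=
      tsum_eq_sum (fun i hi => by
        rw [hFzero _ (fun hc => hi (hNT i hc))]; ring)
    have l3 : ∑' i : ℤ, F (i-1)^2 = ∑' i : ℤ, F i^2 := by
      have := (Equiv.subRight (1:ℤ)).tsum_eq (fun i => F i^2)
      rw [← this]
      congr 1
    rw [← l1, l3, l2]
  -- main sums
  set S : ℝ := ∑ i ∈ T, q i * F i with hSdef
  set U : ℝ := ∑ i ∈ T, F i^2 with hUdef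
  set W : ℝ := ∑ i ∈ T, E i * F i with hWdef
  have hGS : ∑ i ∈ T, ρ i * q i * h (-q i) = S := by
    rw [hSdef]
    apply Finset.sum_congr rfl
    intro i _
    rw [hFi]; ring
  have hSnonpos : S ≤ 0 := by
    rw [hSdef]
    exact Finset.sum_nonpos (fun i _ => hG i)
  have hUS : U ≤ M * C * (-S) := by
    rw [hUdef, hSdef]
    calc ∑ i ∈ T, F i^2 ≤ ∑ i ∈ T, M*C*(-(q i * F i)) := Finset.sum_le_sum (fun i _ => hFsq i)
      _ = M * C * (-∑ i ∈ T, q i * F i) := by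
          rw [← Finset.mul_sum, ← Finset.sum_neg_distrib]
  -- step 1: convexity
  have step1 : ∑ i ∈ T, Q (ρplus i) - ∑ i ∈ T, Q (ρ i)
      ≤ ∑ i ∈ T, Q' (ρplus i) * (ρplus i - ρ i) := by
    rw [← Finset.sum_sub_distrib]
    apply Finset.sum_le_sum
    intro i _
    have := hconv (ρ i) (ρplus i) (hρ i) (hρplusmem i)
    linarith
  -- step 2: Abel summation and decomposition
  have habel : ∑ i ∈ T, Q' (ρplus i) * (ρplus i - ρ i) = δt * S + (δt/δx) * W := by
    have e1 : ∀ i ∈ T, Q' (ρplus i) * (ρplus i - ρ i)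
        = (δt/δx) * (Q' (ρplus i) * F (i-1) - Q' (ρplus i) * F i) := by
      intro i _
      rw [hdiffi i]; ring
    rw [Finset.sum_congr rfl e1, ← Finset.mul_sum, Finset.sum_sub_distrib, hshift1,
      ← Finset.sum_sub_distrib]
    have e2 : ∀ i ∈ T, Q' (ρplus (i+1)) * F i - Q' (ρplus i) * F i
        = δx * (q i * F i) + E i * F i := by
      intro i _
      have hqi := hqd i
      rw [hEi]
      linear_combination (-(F i)) * hqi
    rw [Finset.sum_congr rfl e2, Finset.sum_add_distrib, ← Finset.mul_sum, ← hSdef, ← hWdef]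
    field_simp
  -- step 3: bound on W
  have hWb : W ≤ (K*(δt/δx))*(4*U) := by
    have hKdd : 0 ≤ K*(δt/δx) := mul_nonneg hK0 (div_pos hδt hδx).le
    have pt : ∀ i ∈ T, E i * F i
        ≤ K*(δt/δx) * ((1/2)*F (i-1)^2 + 3*F i^2 + (1/2)*F (i+1)^2) := by
      intro i _
      have h1 : E i * F i ≤ |E i| * |F i| := by
        rw [← abs_mul]; exact le_abs_self _
      have h2 : |E i| * |F i| ≤ (K*(δt/δx) * (|F (i-1)| + 2*|F i| + |F (i+1)|)) * |F i| :=
        mul_le_mul_of_nonneg_right (hE i) (abs_nonneg _)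
      have ha : |F (i-1)| * |F i| ≤ (1/2)*(F (i-1)^2 + F i^2) := by
        nlinarith [sq_nonneg (|F (i-1)| - |F i|), sq_abs (F (i-1)), sq_abs (F i)]
      have hb' : |F (i+1)| * |F i| ≤ (1/2)*(F (i+1)^2 + F i^2) := by
        nlinarith [sq_nonneg (|F (i+1)| - |F i|), sq_abs (F (i+1)), sq_abs (F i)]
      have hc : |F i| * |F i| = F i^2 := by
        rw [abs_mul_abs_self]; ring
      calc E i * F i ≤ |E i| * |F i| := h1
        _ ≤ (K*(δt/δx) * (|F (i-1)| + 2*|F i| + |F (i+1)|)) * |F i| := h2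
        _ = K*(δt/δx) * (|F (i-1)| * |F i| + 2 * (|F i| * |F i|) + |F (i+1)| * |F i|) := by ring
        _ ≤ K*(δt/δx) * ((1/2)*(F (i-1)^2 + F i^2) + 2*F i^2 + (1/2)*(F (i+1)^2 + F i^2)) := by
            apply mul_le_mul_of_nonneg_left _ hKdd
            rw [hc] at *
            linarith [ha, hb']
        _ = K*(δt/δx) * ((1/2)*F (i-1)^2 + 3*F i^2 + (1/2)*F (i+1)^2) := by ring
    have hsum : W ≤ ∑ i ∈ T, K*(δt/δx) * ((1/2)*F (i-1)^2 + 3*F i^2 + (1/2)*F (i+1)^2) := by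
      rw [hWdef]; exact Finset.sum_le_sum pt
    have expand : ∑ i ∈ T, K*(δt/δx) * ((1/2)*F (i-1)^2 + 3*F i^2 + (1/2)*F (i+1)^2)
        = K*(δt/δx) * ((1/2)*(∑ i ∈ T, F (i-1)^2) + 3*(∑ i ∈ T, F i^2)
            + (1/2)*(∑ i ∈ T, F (i+1)^2)) := by
      rw [← Finset.mul_sum]
      congr 1
      rw [Finset.sum_add_distrib, Finset.sum_add_distrib, ← Finset.mul_sum, ← Finset.mul_sum,
        ← Finset.mul_sum]
    rw [expand, hshift3, hshift2, ← hUdef] at hsum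
    have : K*(δt/δx) * ((1/2)*U + 3*U + (1/2)*U) = (K*(δt/δx))*(4*U) := by ring
    linarith
  -- final assembly
  have hdd : (0:ℝ) ≤ δt/δx := (div_pos hδt hδx).le
  have hfinal : (δt/δx) * W ≤ δt * (δt * (4*M*C*K) / δx^2) * (-S) := by
    have t1 : (δt/δx) * W ≤ (δt/δx) * ((K*(δt/δx))*(4*U)) :=
      mul_le_mul_of_nonneg_left hWb hdd
    have t2 : (K*(δt/δx))*(4*U) ≤ (K*(δt/δx))*(4*(M*C*(-S))) :=
      mul_le_mul_of_nonneg_left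
        (mul_le_mul_of_nonneg_left hUS (by norm_num)) (mul_nonneg hK0 hdd)
    have t2' : (δt/δx) * ((K*(δt/δx))*(4*U)) ≤ (δt/δx) * ((K*(δt/δx))*(4*(M*C*(-S)))) :=
      mul_le_mul_of_nonneg_left t2 hdd
    have t3 : (δt/δx) * ((K*(δt/δx))*(4*(M*C*(-S)))) = δt * (δt * (4*M*C*K) / δx^2) * (-S) := by
      field_simp
    linarith
  have hXle : δt * (4*M*C*K) / δx^2 ≤ 1 := hCFL2
  constructor
  · rw [hs1, hs2, hs3, hGS]
    have e : δt * (1 - δt * (4 * M * C * K) / δx ^ 2) * S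
        = δt * S + δt * (δt * (4*M*C*K) / δx^2) * (-S) := by ring
    rw [e]
    linarith [step1, habel, hfinal]
  · rw [hs3, hGS]
    have h1 : 0 ≤ δt * (1 - δt * (4 * M * C * K) / δx ^ 2) := by
      apply mul_nonneg hδt.le
      linarith
    nlinarith [mul_nonneg h1 (neg_nonneg.mpr hSnonpos)]
end

section
/- If (ρ^k, w^k) ∈ [0, R] × (−1, b) are sequences such that ρ^k·w^k·β(w^k) → 0 as k → ∞, where β : (−1, b) → ℝ is continuous, strictly increasing, and β(0) = 0, then ρ^k·|w^k| → 0 as k → ∞. -/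
/-!
A monotone `β` with `β 0 = 0` has the sign of its argument, so `w * β w = |w| * |β w| ≥ 0`, and
once `|w| ≥ δ` the factor `|β w|` is at least `m δ = min (β δ) (-β (-δ))`, which is positive by
strict monotonicity. Hence `ρ * |w| ≤ R * δ + (ρ * w * β w) / m δ` for every `δ`, and letting
first `k → ∞` and then `δ → 0` gives the claim.
-/

open Set Filter Topology

lemma tendsto_zero_of_forall_le_mul_add {ι : Type*} {l : Filter ι} {x y : ι → ℝ} (R δ₀ : ℝ)
    (hδ₀ : 0 < δ₀) (hx : ∀ i, 0 ≤ x i) (hy : Tendsto y l (𝓝 0))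
    (h : ∀ δ ∈ Ioo 0 δ₀, ∃ C, ∀ i, x i ≤ R * δ + C * y i) :
    Tendsto x l (𝓝 0) := by
  rw [tendsto_order]
  refine ⟨fun a ha => .of_forall fun i => ha.trans_le (hx i), fun a ha => ?_⟩
  have hRδ : Tendsto (fun δ => R * δ) (𝓝[>] 0) (𝓝 0) :=
    tendsto_nhdsWithin_of_tendsto_nhds (by simpa using (continuous_const_mul R).tendsto 0)
  obtain ⟨δ, hδa, hδ⟩ :=
    ((hRδ.eventually (gt_mem_nhds (half_pos ha))).and (Ioo_mem_nhdsGT hδ₀)).exists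
  obtain ⟨C, hC⟩ := h δ hδ
  have hbound : Tendsto (fun i => R * δ + C * y i) l (𝓝 (R * δ)) := by
    simpa using tendsto_const_nhds.add (hy.const_mul C)
  filter_upwards [hbound.eventually (gt_mem_nhds (by linarith : R * δ < a))] with i hi
  exact (hC i).trans_lt hi

section

variable {s : Set ℝ} {β : ℝ → ℝ} {δ w : ℝ}

lemma mul_nonneg_of_monotoneOn (hβ : MonotoneOn β s) (h0 : 0 ∈ s) (hβ0 : β 0 = 0)
    (hw : w ∈ s) : 0 ≤ w * β w := by
  rcases le_total 0 w with hw0 | hw0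
  · exact mul_nonneg hw0 (hβ0 ▸ hβ h0 hw hw0)
  · exact mul_nonneg_of_nonpos_of_nonpos hw0 (hβ0 ▸ hβ hw h0 hw0)

lemma abs_mul_min_le_mul_of_le_abs (hβ : MonotoneOn β s) (hδ : δ ∈ s) (hnδ : -δ ∈ s)
    (hw : w ∈ s) (hδw : δ ≤ |w|) : |w| * min (β δ) (-β (-δ)) ≤ w * β w := by
  rcases abs_cases w with ⟨habs, hw0⟩ | ⟨habs, hw0⟩
  · rw [habs] at hδw ⊢
    exact mul_le_mul_of_nonneg_left ((min_le_left _ _).trans (hβ hδ hw hδw)) hw0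
  · rw [habs] at hδw ⊢
    have hβw : β w ≤ β (-δ) := hβ hw hnδ (by linarith)
    nlinarith [min_le_right (β δ) (-β (-δ))]

lemma min_pos_of_strictMonoOn (hβ : StrictMonoOn β s) (h0 : 0 ∈ s) (hβ0 : β 0 = 0)
    (hδ : δ ∈ s) (hnδ : -δ ∈ s) (hδ0 : 0 < δ) : 0 < min (β δ) (-β (-δ)) := by
  have hpos : β 0 < β δ := hβ h0 hδ hδ0
  have hneg : β (-δ) < β 0 := hβ hnδ h0 (neg_neg_of_pos hδ0)
  rw [hβ0] at hpos hneg
  exact lt_min hpos (neg_pos.mpr hneg)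

lemma mul_abs_le_mul_add_inv_mul (hβ : StrictMonoOn β s) (h0 : 0 ∈ s) (hβ0 : β 0 = 0)
    (hδ : δ ∈ s) (hnδ : -δ ∈ s) (hδ0 : 0 < δ) {ρ R : ℝ} (hρ : ρ ∈ Icc 0 R) (hw : w ∈ s) :
    ρ * |w| ≤ R * δ + (min (β δ) (-β (-δ)))⁻¹ * (ρ * w * β w) := by
  set m := min (β δ) (-β (-δ))
  have hm : 0 < m := min_pos_of_strictMonoOn hβ h0 hβ0 hδ hnδ hδ0
  have hρwβ : 0 ≤ ρ * w * β w := by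
    rw [mul_assoc]
    exact mul_nonneg hρ.1 (mul_nonneg_of_monotoneOn hβ.monotoneOn h0 hβ0 hw)
  rcases lt_or_ge |w| δ with hsmall | hlarge
  · have : ρ * |w| ≤ R * δ := mul_le_mul hρ.2 hsmall.le (abs_nonneg w) (hρ.1.trans hρ.2)
    have : 0 ≤ m⁻¹ * (ρ * w * β w) := mul_nonneg (inv_nonneg.mpr hm.le) hρwβ
    linarith
  · have hkey := abs_mul_min_le_mul_of_le_abs hβ.monotoneOn hδ hnδ hw hlarge
    have : ρ * |w| ≤ m⁻¹ * (ρ * w * β w) :=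
      calc ρ * |w| = m⁻¹ * (ρ * (|w| * m)) := by field_simp
        _ ≤ m⁻¹ * (ρ * w * β w) := by
          rw [mul_assoc ρ w]
          gcongr
          exact hρ.1
    linarith [mul_nonneg (hρ.1.trans hρ.2) hδ0.le]

end

theorem rho_abs_w_tendsto_zero_general (R b : ℝ) (hb : 0 < b)
    (β : ℝ → ℝ)
    (hmono : StrictMonoOn β (Set.Ioo (-1 : ℝ) b)) (hβ0 : β 0 = 0)
    (ρ w : ℕ → ℝ)
    (hρ : ∀ k, ρ k ∈ Set.Icc (0 : ℝ) R)
    (hw : ∀ k, w k ∈ Set.Ioo (-1 : ℝ) b)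
    (hlim : Filter.Tendsto (fun k => ρ k * w k * β (w k)) Filter.atTop (nhds 0)) :
    Filter.Tendsto (fun k => ρ k * |w k|) Filter.atTop (nhds 0) := by
  have h0 : (0 : ℝ) ∈ Ioo (-1) b := ⟨by norm_num, hb⟩
  refine tendsto_zero_of_forall_le_mul_add R (min 1 b) (lt_min one_pos hb)
    (fun k => mul_nonneg (hρ k).1 (abs_nonneg _)) hlim ?_
  rintro δ ⟨hδ0, hδ⟩
  have hδs : δ ∈ Ioo (-1) b := ⟨by linarith, hδ.trans_le (min_le_right _ _)⟩
  have hnδs : -δ ∈ Ioo (-1) b := ⟨by linarith [min_le_left 1 b], by linarith⟩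
  exact ⟨_, fun k => mul_abs_le_mul_add_inv_mul hmono h0 hβ0 hδs hnδs hδ0 (hρ k) (hw k)⟩

theorem rho_abs_w_tendsto_zero (R b : ℝ) (hR : 0 < R) (hb : 0 < b)
    (β : ℝ → ℝ) (hcont : ContinuousOn β (Set.Ioo (-1 : ℝ) b))
    (hmono : StrictMonoOn β (Set.Ioo (-1 : ℝ) b)) (hβ0 : β 0 = 0)
    (ρ w : ℕ → ℝ)
    (hρ : ∀ k, ρ k ∈ Set.Icc (0 : ℝ) R)
    (hw : ∀ k, w k ∈ Set.Ioo (-1 : ℝ) b)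
    (hlim : Filter.Tendsto (fun k => ρ k * w k * β (w k)) Filter.atTop (nhds 0)) :
    Filter.Tendsto (fun k => ρ k * |w k|) Filter.atTop (nhds 0) :=
  rho_abs_w_tendsto_zero_general R b hb β hmono hβ0 ρ w hρ hw hlim
end

section
/- If ρ^k ∈ [0, R], a^k ∈ ℝ with |a^k| ≤ A for all k, w^k = h(a^k/δx) where h : ℝ → (−1, b) is a continuous strictly increasing function with h(0) = 0, and ρ^k|w^k| → 0, then ρ^k|a^k| → 0 as k → ∞. -/
open Set Filter

/-! Away from `0` a strictly monotone `h` with `h 0 = 0` is bounded away from `0`: if `δ ≤ |s|`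
then `|h (s / δx)| ≥ m > 0`. Hence `ρ |a| ≤ R δ + (A / m) ρ |w|`, and since `δ` is arbitrary and
`ρ |w| → 0`, the quantity `ρ |a|` is eventually below any `ε > 0`. -/

theorem StrictMono.exists_pos_le_abs_of_le_abs {f : ℝ → ℝ} (hf : StrictMono f) (hf0 : f 0 = 0)
    {δ : ℝ} (hδ : 0 < δ) : ∃ m > 0, ∀ s, δ ≤ |s| → m ≤ |f s| := by
  have hpos : 0 < f δ := hf0 ▸ hf hδ
  have hneg : f (-δ) < 0 := hf0 ▸ hf (neg_neg_iff_pos.mpr hδ)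
  refine ⟨min (f δ) (-f (-δ)), lt_min hpos (neg_pos.mpr hneg), fun s hs => ?_⟩
  rcases le_abs'.mp hs with hs | hs
  · have hfs : f s ≤ f (-δ) := hf.monotone (by linarith)
    exact (min_le_right _ _).trans (by rw [abs_of_neg (by linarith)]; linarith)
  · exact (min_le_left _ _).trans ((hf.monotone hs).trans (le_abs_self _))

theorem mul_abs_le_add_div_mul_of_le_abs {ρ a w R A δ m : ℝ} (hρ : ρ ∈ Icc 0 R) (ha : |a| ≤ A)
    (hδ : 0 ≤ δ) (hm : 0 < m) (haw : δ ≤ |a| → m ≤ |w|) :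
    ρ * |a| ≤ R * δ + A / m * (ρ * |w|) := by
  obtain ⟨hρ0, hρR⟩ := hρ
  have hA : 0 ≤ A := (abs_nonneg a).trans ha
  have hRδ : 0 ≤ R * δ := mul_nonneg (hρ0.trans hρR) hδ
  rcases lt_or_ge |a| δ with hsmall | hlarge
  · calc ρ * |a| ≤ R * δ := mul_le_mul hρR hsmall.le (abs_nonneg a) (hρ0.trans hρR)
      _ ≤ R * δ + A / m * (ρ * |w|) := le_add_of_nonneg_right (by positivity)
  · calc ρ * |a| ≤ ρ * A := mul_le_mul_of_nonneg_left ha hρ0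
      _ = A / m * (ρ * m) := by field_simp
      _ ≤ A / m * (ρ * |w|) := by gcongr; exact haw hlarge
      _ ≤ R * δ + A / m * (ρ * |w|) := le_add_of_nonneg_left hRδ

theorem Filter.Tendsto.mul_abs_of_mul_abs {ι : Type*} {l : Filter ι} {ρ a w : ι → ℝ} {R A : ℝ}
    (hρ : ∀ k, ρ k ∈ Icc 0 R) (ha : ∀ k, |a k| ≤ A)
    (haw : ∀ δ > 0, ∃ m > 0, ∀ k, δ ≤ |a k| → m ≤ |w k|)
    (hlim : Tendsto (fun k => ρ k * |w k|) l (nhds 0)) :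
    Tendsto (fun k => ρ k * |a k|) l (nhds 0) := by
  refine tendsto_order.2
    ⟨fun ε hε => .of_forall fun k => hε.trans_le (mul_nonneg (hρ k).1 (abs_nonneg _)),
      fun ε hε => ?_⟩
  obtain ⟨δ, hδ, hRδ⟩ := exists_pos_mul_lt hε R
  obtain ⟨m, hm, hm_le⟩ := haw δ hδ
  have hmul : Tendsto (fun k => A / m * (ρ k * |w k|)) l (nhds 0) := by
    simpa using hlim.const_mul (A / m)
  have hsmall : ∀ᶠ k in l, A / m * (ρ k * |w k|) < ε - R * δ :=
    hmul.eventually_lt_const (sub_pos.mpr hRδ)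
  filter_upwards [hsmall] with k hk
  linarith [mul_abs_le_add_div_mul_of_le_abs (hρ k) (ha k) hδ.le hm (hm_le k)]

theorem rho_abs_a_tendsto_zero_general (R A δx : ℝ)
    (hδx : 0 < δx)
    (h : ℝ → ℝ) (hmono : StrictMono h) (h0 : h 0 = 0)
    (ρ a w : ℕ → ℝ)
    (hρ : ∀ k, ρ k ∈ Set.Icc (0 : ℝ) R)
    (ha : ∀ k, |a k| ≤ A)
    (hw : ∀ k, w k = h (a k / δx))
    (hlim : Filter.Tendsto (fun k => ρ k * |w k|) Filter.atTop (nhds 0)) :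
    Filter.Tendsto (fun k => ρ k * |a k|) Filter.atTop (nhds 0) := by
  refine hlim.mul_abs_of_mul_abs hρ ha fun δ hδ => ?_
  have hmono' : StrictMono fun s => h (s / δx) := hmono.comp (strictMono_div_right_of_pos hδx)
  obtain ⟨m, hm, hm_le⟩ := hmono'.exists_pos_le_abs_of_le_abs (by simpa using h0) hδ
  exact ⟨m, hm, fun k hk => hw k ▸ hm_le (a k) hk⟩

theorem rho_abs_a_tendsto_zero (R A δx b : ℝ)
    (hR : 0 < R) (hA : 0 < A) (hδx : 0 < δx) (hb : 0 < b)
    (h : ℝ → ℝ) (hcont : Continuous h) (hmono : StrictMono h) (h0 : h 0 = 0)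
    (hhrange : ∀ s, h s ∈ Set.Ioo (-1 : ℝ) b)
    (ρ a w : ℕ → ℝ)
    (hρ : ∀ k, ρ k ∈ Set.Icc (0 : ℝ) R)
    (ha : ∀ k, |a k| ≤ A)
    (hw : ∀ k, w k = h (a k / δx))
    (hlim : Filter.Tendsto (fun k => ρ k * |w k|) Filter.atTop (nhds 0)) :
    Filter.Tendsto (fun k => ρ k * |a k|) Filter.atTop (nhds 0) :=
  rho_abs_a_tendsto_zero_general R A δx hδx h hmono h0 ρ a w hρ ha hw hlim
end
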